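/- For real numbers a₁, a₂, b₁, b₂ > 0 and a real exponent σ ≥ 2, one has (a₁+b₁)^σ · (a₂+b₂)^σ ≥ a₁^σ a₂^σ + b₁^σ b₂^σ + σ·a₁^σ a₂^{σ-1} b₂. -/
import Mathlib

lemma superadd_rpow {a b σ : ℝ} (ha : 0 ≤ a) (hb : 0 ≤ b) (hσ : 1 ≤ σ) :
    a ^ σ + b ^ σ ≤ (a + b) ^ σ := by
  lift a to NNReal using ha
  lift b to NNReal using hb
  have := NNReal.add_rpow_le_rpow_add a b hσ
  exact_mod_cast this

lemma bernoulli_rpow {a b σ : ℝ} (ha : 0 < a) (hb : 0 ≤ b) (hσ : 1 ≤ σ) :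
    a ^ σ + σ * a ^ (σ - 1) * b ≤ (a + b) ^ σ := by
  have h0 : (-1 : ℝ) ≤ b / a := le_trans (by norm_num) (div_nonneg hb ha.le)
  have h := one_add_mul_self_le_rpow_one_add h0 hσ
  have key : a ^ σ * (1 + σ * (b / a)) ≤ a ^ σ * (1 + b / a) ^ σ := by
    exact mul_le_mul_of_nonneg_left h (Real.rpow_nonneg ha.le σ)
  have e1 : a ^ σ * (1 + b / a) ^ σ = (a + b) ^ σ := by
    rw [← Real.mul_rpow ha.le (by positivity)]
    field_simp
  have e2 : a ^ σ * (1 + σ * (b / a)) = a ^ σ + σ * a ^ (σ - 1) * b := by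
    rw [mul_add, mul_one]
    congr 1
    rw [show a ^ σ = a ^ (σ - 1) * a by
      rw [← Real.rpow_add_one ha.ne' (σ - 1)]; ring_nf]
    field_simp
  rw [e1] at key; rw [e2] at key; exact key

theorem pow_add_mul_ge (a₁ a₂ b₁ b₂ σ : ℝ) (ha₁ : 0 < a₁) (ha₂ : 0 < a₂)
    (hb₁ : 0 < b₁) (hb₂ : 0 < b₂) (hσ : 2 ≤ σ) :
    (a₁ + b₁) ^ σ * (a₂ + b₂) ^ σ ≥
      a₁ ^ σ * a₂ ^ σ + b₁ ^ σ * b₂ ^ σ + σ * a₁ ^ σ * a₂ ^ (σ - 1) * b₂ := by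
  have hσ1 : 1 ≤ σ := by linarith
  have h1 : a₁ ^ σ + b₁ ^ σ ≤ (a₁ + b₁) ^ σ := superadd_rpow ha₁.le hb₁.le hσ1
  have h2 : a₂ ^ σ + σ * a₂ ^ (σ - 1) * b₂ ≤ (a₂ + b₂) ^ σ :=
    bernoulli_rpow ha₂ hb₂.le hσ1
  have h3 : b₂ ^ σ ≤ (a₂ + b₂) ^ σ :=
    Real.rpow_le_rpow hb₂.le (by linarith) (by linarith)
  have hp1 : (0:ℝ) ≤ a₁ ^ σ := Real.rpow_nonneg ha₁.le σ
  have hp2 : (0:ℝ) ≤ b₁ ^ σ := Real.rpow_nonneg hb₁.le σ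
  have hp3 : (0:ℝ) ≤ (a₂ + b₂) ^ σ := Real.rpow_nonneg (by linarith) σ
  calc (a₁ + b₁) ^ σ * (a₂ + b₂) ^ σ
      ≥ (a₁ ^ σ + b₁ ^ σ) * (a₂ + b₂) ^ σ := by
        exact mul_le_mul_of_nonneg_right h1 hp3
    _ = a₁ ^ σ * (a₂ + b₂) ^ σ + b₁ ^ σ * (a₂ + b₂) ^ σ := by ring
    _ ≥ a₁ ^ σ * (a₂ ^ σ + σ * a₂ ^ (σ - 1) * b₂) + b₁ ^ σ * b₂ ^ σ := by
        gcongr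
    _ = a₁ ^ σ * a₂ ^ σ + b₁ ^ σ * b₂ ^ σ + σ * a₁ ^ σ * a₂ ^ (σ - 1) * b₂ := by
        ring
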